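/- arXiv:2404.11306 — 3 statements merged into one kernel-verified Lean document; each statement's English description precedes it below -/
import Mathlib

section
/- For every positive integer d, every real x, and every k ∈ {0,...,d−1}: ∑_{k=0}^{d-1} sins_d²(x − k) = 1, i.e. the POVM elements of phase estimation sum to the identity eigenvalue-wise. -/
open Real Classical

/-- `sins d x = sin(πx)/(d sin(πx/d))` for `x` not a multiple of `d`, and `±1`
(here normalized to `1`, the square being `1`) at multiples of `d`. -/
noncomputable def sins (d : ℕ) (x : ℝ) : ℝ :=
  if ∃ m : ℤ, x = (m : ℝ) * d then 1
  else Real.sin (Real.pi * x) / (d * Real.sin (Real.pi * x / d))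

/-!
With `ζ = exp(-2πi/d)` and the unimodular vector `a j = exp(2πixj/d)`, the amplitude
`∑_j exp(2πi(x-k)j/d)` is `∑_j a j ζ^(jk)`, the discrete Fourier transform of `a` at `k`.
Summing the geometric series shows that its norm is `d |sins d (x-k)|` (a Dirichlet kernel),
and Parseval's identity for the discrete Fourier transform, which rests on the orthogonality
`∑_k (ζ^i/ζ^j)^k = d [i = j]`, gives `∑_k d² sins d (x-k)² = d ∑_j ‖a j‖² = d²`.
-/

open Finset Complex ComplexConjugate

lemma IsPrimitiveRoot.sum_pow_div_pow_eq_ite {K : Type*} [Field K] {ζ : K} {d : ℕ}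
    (hζ : IsPrimitiveRoot ζ d) {i j : ℕ} (hi : i < d) (hj : j < d) :
    ∑ k ∈ range d, (ζ ^ i / ζ ^ j) ^ k = if i = j then (d : K) else 0 := by
  split_ifs with hij
  · subst hij
    simp [div_self (pow_ne_zero i (hζ.ne_zero (by omega)))]
  · have hne : ζ ^ i / ζ ^ j ≠ 1 := fun h =>
      hij (hζ.pow_inj hi hj (div_eq_one_iff_eq (pow_ne_zero j (hζ.ne_zero (by omega))) |>.mp h))
    rw [geom_sum_eq hne, div_pow, ← pow_mul, ← pow_mul, mul_comm i, mul_comm j, pow_mul, pow_mul,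
      hζ.pow_eq_one]
    simp

lemma IsPrimitiveRoot.sum_norm_sq_sum_mul_pow {ζ : ℂ} {d : ℕ} (hζ : IsPrimitiveRoot ζ d)
    (a : ℕ → ℂ) :
    ∑ k ∈ range d, ‖∑ j ∈ range d, a j * ζ ^ (j * k)‖ ^ 2 = d * ∑ j ∈ range d, ‖a j‖ ^ 2 := by
  rcases Nat.eq_zero_or_pos d with rfl | hd
  · simp
  have hconj (j k : ℕ) : conj (ζ ^ (j * k)) = (ζ ^ (j * k))⁻¹ := by
    rw [inv_eq_conj (by rw [norm_pow, hζ.norm'_eq_one hd.ne', one_pow])]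
  apply ofReal_injective
  push_cast
  simp_rw [← mul_conj', map_sum, map_mul, hconj, sum_mul_sum, mul_sum]
  calc ∑ k ∈ range d, ∑ i ∈ range d, ∑ j ∈ range d,
        a i * ζ ^ (i * k) * (conj (a j) * (ζ ^ (j * k))⁻¹)
      = ∑ i ∈ range d, ∑ j ∈ range d, a i * conj (a j) * ∑ k ∈ range d, (ζ ^ i / ζ ^ j) ^ k := by
        rw [sum_comm]
        refine sum_congr rfl fun i _ => ?_
        rw [sum_comm]
        refine sum_congr rfl fun j _ => ?_
        rw [mul_sum]
        refine sum_congr rfl fun k _ => ?_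
        rw [div_pow, pow_mul, pow_mul]
        ring
    _ = ∑ i ∈ range d, ∑ j ∈ range d, a i * conj (a j) * if i = j then (d : ℂ) else 0 := by
        refine sum_congr rfl fun i hi => sum_congr rfl fun j hj => ?_
        rw [hζ.sum_pow_div_pow_eq_ite (mem_range.mp hi) (mem_range.mp hj)]
    _ = ∑ i ∈ range d, (d : ℂ) * (a i * conj (a i)) := by
        simp only [mul_ite, mul_zero, sum_ite_eq, mem_range]
        exact sum_congr rfl fun i hi => by rw [if_pos (mem_range.mp hi), mul_comm]

lemma norm_sum_exp_I_mul_eq_abs_sin_div_sin (n : ℕ) {θ : ℝ} (hθ : Real.sin (θ / 2) ≠ 0) :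
    ‖∑ j ∈ range n, exp (I * (j * θ))‖ = |Real.sin (n * θ / 2) / Real.sin (θ / 2)| := by
  have hpow (m : ℕ) : exp (I * (m * θ)) = exp (I * θ) ^ m := by
    rw [← Complex.exp_nat_mul]; ring_nf
  have hne : exp (I * θ) ≠ 1 := fun h => by
    simpa [h, hθ] using norm_exp_I_mul_ofReal_sub_one θ
  simp_rw [hpow, geom_sum_eq hne, ← hpow, norm_div]
  have hnum := norm_exp_I_mul_ofReal_sub_one (n * θ)
  push_cast at hnum
  rw [hnum, norm_exp_I_mul_ofReal_sub_one, norm_mul, norm_mul, abs_div]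
  simp only [Real.norm_eq_abs]
  field_simp

lemma norm_sum_exp_eq_mul_abs_sins {d : ℕ} (hd : 0 < d) (y : ℝ) :
    ‖∑ j ∈ range d, exp (I * (j * (2 * π * y / d : ℝ)))‖ = d * |sins d y| := by
  have hd' : (d : ℝ) ≠ 0 := by positivity
  by_cases hy : ∃ m : ℤ, y = m * d
  · obtain ⟨m, rfl⟩ := hy
    have hterm (j : ℕ) : exp (I * (j * (2 * π * (m * d) / d : ℝ))) = 1 := by
      rw [mul_div_assoc, mul_div_cancel_right₀ _ hd', ← exp_int_mul_two_pi_mul_I (j * m)]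
      push_cast
      ring_nf
    rw [sum_congr rfl fun j _ => hterm j, sins, if_pos ⟨m, rfl⟩]
    simp
  · have hsin : Real.sin (2 * π * y / d / 2) ≠ 0 := by
      rw [Real.sin_ne_zero_iff]
      rintro n hn
      exact hy ⟨n, by field_simp at hn; linarith⟩
    rw [norm_sum_exp_I_mul_eq_abs_sin_div_sin d hsin, sins, if_neg hy, abs_div, abs_div, abs_mul,
      Nat.abs_cast]
    field_simp

/-- The POVM elements of phase estimation sum to identity eigenvalue-wise:
`∑_{k=0}^{d-1} sins_d²(x − k) = 1`. -/
theorem sins_sq_sum_eq_one (d : ℕ) (hd : 0 < d) (x : ℝ) :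
    ∑ k ∈ Finset.range d, (sins d (x - k)) ^ 2 = 1 := by
  have hζ : IsPrimitiveRoot (exp (2 * π * I / d))⁻¹ d := (isPrimitiveRoot_exp d hd.ne').inv
  have hshift (k j : ℕ) : exp (I * (j * (2 * π * (x - k) / d : ℝ)))
      = exp (I * (j * (2 * π * x / d : ℝ))) * (exp (2 * π * I / d))⁻¹ ^ (j * k) := by
    rw [← Complex.exp_neg, ← Complex.exp_nat_mul, ← Complex.exp_add]
    push_cast
    ring_nf
  have hnorm (j : ℕ) : ‖exp (I * (j * (2 * π * x / d : ℝ)))‖ = 1 := by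
    rw [← ofReal_natCast, ← ofReal_mul, norm_exp_I_mul_ofReal]
  have key : ∑ k ∈ range d, ((d : ℝ) * |sins d (x - k)|) ^ 2 = d ^ 2 := by
    simp_rw [← norm_sum_exp_eq_mul_abs_sins hd, hshift, hζ.sum_norm_sq_sum_mul_pow, hnorm]
    simp [sq]
  simp_rw [mul_pow, sq_abs, ← mul_sum] at key
  exact (mul_eq_left₀ (by positivity)).mp key
end

section
/- For any integer Δ ≥ 1 and any real x with |x| ≤ Δ: ∑_{|δ| ≤ Δ, δ ∈ ℤ} sinc²(x − δ) ≥ 1 − 2/(π²·(Δ − |x| + 1/2)). -/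
open Real

/-- `sinc x = sin(πx)/(πx)`, with `sinc 0 = 1`. -/
noncomputable def sinc (x : ℝ) : ℝ :=
  if x = 0 then 1 else Real.sin (Real.pi * x) / (Real.pi * x)

/-!
Iterating `1 / sin² u + 1 / cos² u = 4 / sin² (2u)` gives
`∑_{k < 2ᵐ} 1 / sin² (θ + kπ/2ᵐ) = 4ᵐ / sin² (2ᵐθ)`: for `x ∉ ℤ` the squares of the periodic sinc
`psinc n (x - δ) = sin (π(x - δ)) / (n sin (π(x - δ)/n))`, `n = 2ᵐ`, sum to `1` over any `n`
consecutive integers `δ`. On the `n` integers nearest to `x` we have `|π(x - δ)/n| ≤ π/2`, where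
`t⁻² ≤ sin⁻² t ≤ t⁻² + 1` gives `sinc² ≤ psinc² ≤ sinc² + n⁻²`. So the sum of `sinc² (x - δ)` over
this window lies in `[1 - 1/n, 1]`, and letting `n → ∞`, `∑_{δ ∈ ℤ} sinc² (x - δ) = 1`.

Outside `|δ| ≤ Δ` we bound `sinc² (x - δ) ≤ π⁻² (x - δ)⁻²`, and
`(k + c + 1/2)⁻² ≤ (k + c)⁻¹ - (k + c + 1)⁻¹` telescopes to at most `(π² (Δ + 1/2 - |x|))⁻¹` on
each side.
-/

open Finset Filter Topology

theorem sin_sq_pi_mul_sub_int (x : ℝ) (δ : ℤ) : sin (π * (x - δ)) ^ 2 = sin (π * x) ^ 2 := by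
  rw [mul_sub, mul_comm π (δ : ℝ), sin_sub_int_mul_pi, mul_pow,
    ← zpow_natCast ((-1 : ℝ) ^ δ), ← zpow_mul, mul_comm δ, zpow_mul]
  norm_num

theorem sinc_sub_int_sq {x : ℝ} {δ : ℤ} (h : x ≠ δ) :
    _root_.sinc (x - δ) ^ 2 = sin (π * x) ^ 2 / (π * (x - δ)) ^ 2 := by
  rw [_root_.sinc, if_neg (sub_ne_zero.2 h), div_pow, sin_sq_pi_mul_sub_int]

theorem inv_sq_le_inv_sin_sq {t : ℝ} (h : sin t ≠ 0) : (t ^ 2)⁻¹ ≤ (sin t ^ 2)⁻¹ :=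
  inv_anti₀ (by positivity) sin_sq_le_sq

theorem sq_le_sin_sq_mul_one_add_sq {t : ℝ} (h₀ : 0 ≤ t) (h : t ≤ π / 2) :
    t ^ 2 ≤ sin t ^ 2 * (1 + t ^ 2) := by
  rcases h.lt_or_eq with h | rfl
  · have hcos : 0 < cos t := cos_pos_of_mem_Ioo ⟨by linarith [pi_pos], h⟩
    have htan : t * cos t ≤ sin t := by
      rw [← le_div_iff₀ hcos, ← tan_eq_sin_div_cos]
      exact le_tan h₀ h
    have := pow_le_pow_left₀ (by positivity) htan 2
    nlinarith [sin_sq_add_cos_sq t]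
  · rw [sin_pi_div_two]
    linarith

theorem inv_sin_sq_le_inv_sq_add_one {t : ℝ} (h₀ : t ≠ 0) (h : |t| ≤ π / 2) :
    (sin t ^ 2)⁻¹ ≤ (t ^ 2)⁻¹ + 1 := by
  have habs : sin |t| ^ 2 = sin t ^ 2 := by
    rcases abs_choice t with ht | ht <;> simp [ht]
  have key := sq_le_sin_sq_mul_one_add_sq (abs_nonneg t) h
  rw [sq_abs, habs] at key
  calc (sin t ^ 2)⁻¹ ≤ (t ^ 2 / (1 + t ^ 2))⁻¹ :=
        inv_anti₀ (by positivity) ((div_le_iff₀ (by positivity)).2 key)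
    _ = (t ^ 2)⁻¹ + 1 := by field_simp

theorem inv_sin_sq_add_inv_cos_sq {u : ℝ} (h : sin (2 * u) ≠ 0) :
    (sin u ^ 2)⁻¹ + (cos u ^ 2)⁻¹ = 4 * (sin (2 * u) ^ 2)⁻¹ := by
  rw [sin_two_mul] at h ⊢
  have hs : sin u ≠ 0 := by contrapose! h; simp [h]
  have hc : cos u ≠ 0 := by contrapose! h; simp [h]
  field_simp
  linear_combination (4 : ℝ) * sin_sq_add_cos_sq u

theorem sum_range_inv_sin_sq_two_pow (m : ℕ) {θ : ℝ} (h : sin (2 ^ m * θ) ≠ 0) :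
    ∑ k ∈ range (2 ^ m), (sin (θ + k * π / 2 ^ m) ^ 2)⁻¹
      = (2 ^ m) ^ 2 * (sin (2 ^ m * θ) ^ 2)⁻¹ := by
  induction m generalizing θ with
  | zero => simp
  | succ m ih =>
    have h2θ : sin (2 ^ m * (2 * θ)) ≠ 0 := by rwa [← mul_assoc, ← pow_succ]
    have hpair : ∀ k : ℕ, (sin (θ + k * π / 2 ^ (m + 1)) ^ 2)⁻¹
        + (sin (θ + ((2 ^ m + k : ℕ) : ℝ) * π / 2 ^ (m + 1)) ^ 2)⁻¹
        = 4 * (sin (2 * θ + k * π / 2 ^ m) ^ 2)⁻¹ := by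
      intro k
      have hdouble : 2 * θ + k * π / 2 ^ m = 2 * (θ + k * π / 2 ^ (m + 1)) := by
        field_simp; ring
      have hshift : θ + ((2 ^ m + k : ℕ) : ℝ) * π / 2 ^ (m + 1)
          = θ + k * π / 2 ^ (m + 1) + π / 2 := by
        push_cast; field_simp; ring
      rw [hshift, sin_add_pi_div_two, hdouble]
      refine inv_sin_sq_add_inv_cos_sq ?_
      rw [← hdouble]
      intro hzero
      obtain ⟨j, hj⟩ := sin_eq_zero_iff.1 hzero
      apply h
      have : 2 ^ (m + 1) * θ = ((2 ^ m * j - k : ℤ) : ℝ) * π := by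
        push_cast
        field_simp at hj
        linear_combination -hj
      rw [this, sin_int_mul_pi]
    have hsplit : 2 ^ (m + 1) = 2 ^ m + 2 ^ m := by ring
    rw [hsplit, sum_range_add, ← sum_add_distrib, sum_congr rfl fun k _ => hpair k, ← mul_sum,
      ih h2θ, ← mul_assoc (2 ^ m : ℝ), ← pow_succ]
    ring

noncomputable def psinc (n y : ℝ) : ℝ := sin (π * y) / (n * sin (π * y / n))

theorem sinc_sq_eq_mul_inv_sq {n y : ℝ} (hn : n ≠ 0) (hy : y ≠ 0) :
    _root_.sinc y ^ 2 = sin (π * y) ^ 2 / n ^ 2 * ((π * y / n) ^ 2)⁻¹ := by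
  rw [_root_.sinc, if_neg hy]
  field_simp

theorem psinc_sq_eq_mul_inv_sin_sq (n y : ℝ) :
    psinc n y ^ 2 = sin (π * y) ^ 2 / n ^ 2 * (sin (π * y / n) ^ 2)⁻¹ := by
  rw [psinc]
  ring

theorem abs_pi_mul_div_le {n y : ℝ} (hn : 0 < n) (hy : |y| ≤ n / 2) : |π * y / n| ≤ π / 2 := by
  rw [abs_div, abs_mul, abs_of_pos pi_pos, abs_of_pos hn, div_le_div_iff₀ hn two_pos]
  nlinarith [pi_pos]

theorem sinc_sq_le_psinc_sq {n y : ℝ} (hn : 0 < n) (hy₀ : y ≠ 0) (hy : |y| ≤ n / 2) :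
    _root_.sinc y ^ 2 ≤ psinc n y ^ 2 := by
  have ht : |π * y / n| < π := (abs_pi_mul_div_le hn hy).trans_lt (half_lt_self pi_pos)
  have hsin : sin (π * y / n) ≠ 0 :=
    (sin_eq_zero_iff_of_lt_of_lt (neg_lt_of_abs_lt ht) (lt_of_abs_lt ht)).not.2 (by positivity)
  rw [sinc_sq_eq_mul_inv_sq hn.ne' hy₀, psinc_sq_eq_mul_inv_sin_sq]
  exact mul_le_mul_of_nonneg_left (inv_sq_le_inv_sin_sq hsin) (by positivity)

theorem psinc_sq_le_sinc_sq_add {n y : ℝ} (hn : 0 < n) (hy₀ : y ≠ 0) (hy : |y| ≤ n / 2) :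
    psinc n y ^ 2 ≤ _root_.sinc y ^ 2 + (n ^ 2)⁻¹ := by
  rw [sinc_sq_eq_mul_inv_sq hn.ne' hy₀, psinc_sq_eq_mul_inv_sin_sq]
  calc sin (π * y) ^ 2 / n ^ 2 * (sin (π * y / n) ^ 2)⁻¹
      ≤ sin (π * y) ^ 2 / n ^ 2 * (((π * y / n) ^ 2)⁻¹ + 1) :=
        mul_le_mul_of_nonneg_left
          (inv_sin_sq_le_inv_sq_add_one (by positivity) (abs_pi_mul_div_le hn hy)) (by positivity)
    _ ≤ sin (π * y) ^ 2 / n ^ 2 * ((π * y / n) ^ 2)⁻¹ + (n ^ 2)⁻¹ := by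
        rw [mul_add, mul_one, div_eq_mul_inv (sin _ ^ 2)]
        gcongr
        exact mul_le_of_le_one_left (by positivity) (sin_sq_le_one _)

theorem sum_range_psinc_sq {x : ℝ} (hx : sin (π * x) ≠ 0) (m : ℕ) (a : ℤ) :
    ∑ k ∈ range (2 ^ m), psinc (2 ^ m) (x - (a + k)) ^ 2 = 1 := by
  have hθ : 2 ^ m * (π * (a - x) / 2 ^ m) = -(π * (x - a)) := by field_simp; ring
  have hsin : sin (2 ^ m * (π * (a - x) / 2 ^ m)) ^ 2 = sin (π * x) ^ 2 := by
    rw [hθ, sin_neg, neg_sq, sin_sq_pi_mul_sub_int]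
  have hterm : ∀ k : ℕ, psinc (2 ^ m) (x - (a + k)) ^ 2
      = sin (π * x) ^ 2 / (2 ^ m) ^ 2 * (sin (π * (a - x) / 2 ^ m + k * π / 2 ^ m) ^ 2)⁻¹ := by
    intro k
    rw [psinc_sq_eq_mul_inv_sin_sq,
      show π * (x - (a + k)) / 2 ^ m = -(π * (a - x) / 2 ^ m + k * π / 2 ^ m) by ring, sin_neg,
      neg_sq, ← Int.cast_natCast, ← Int.cast_add, sin_sq_pi_mul_sub_int]
  rw [sum_congr rfl fun k _ => hterm k, ← mul_sum, sum_range_inv_sin_sq_two_pow m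
    (pow_ne_zero_iff two_ne_zero |>.1 (hsin ▸ pow_ne_zero 2 hx)), hsin]
  field_simp

theorem sum_Ico_add_natCast {M : Type*} [AddCommMonoid M] (g : ℤ → M) (a : ℤ) (n : ℕ) :
    ∑ δ ∈ Ico a (a + n), g δ = ∑ k ∈ range n, g (a + k) := by
  rw [Int.Ico_eq_finset_map, sum_map]
  simp

noncomputable def nearestIntegers (x : ℝ) (n : ℕ) : Finset ℤ := Ico ⌈x - n / 2⌉ (⌈x - n / 2⌉ + n)

theorem mem_nearestIntegers {x : ℝ} {n : ℕ} {δ : ℤ} :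
    δ ∈ nearestIntegers x n ↔ x - n / 2 ≤ δ ∧ δ < x + n / 2 := by
  rw [nearestIntegers, mem_Ico, Int.ceil_le, ← sub_lt_iff_lt_add, Int.lt_ceil]
  push_cast
  constructor <;> rintro ⟨h₁, h₂⟩ <;> constructor <;> linarith

theorem abs_sub_le_of_mem_nearestIntegers {x : ℝ} {n : ℕ} {δ : ℤ} (h : δ ∈ nearestIntegers x n) :
    |x - δ| ≤ n / 2 := by
  rw [mem_nearestIntegers] at h
  exact abs_le.2 ⟨by linarith, by linarith⟩

theorem card_nearestIntegers (x : ℝ) (n : ℕ) : #(nearestIntegers x n) = n := by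
  simp [nearestIntegers]

theorem sum_sinc_sq_nearestIntegers_mem_Icc {x : ℝ} (hx : sin (π * x) ≠ 0) (m : ℕ) :
    ∑ δ ∈ nearestIntegers x (2 ^ m), _root_.sinc (x - δ) ^ 2 ∈ Set.Icc (1 - (2 ^ m)⁻¹) 1 := by
  have hn : (0 : ℝ) < 2 ^ m := by positivity
  have hne : ∀ δ : ℤ, x - δ ≠ 0 := fun δ h => hx (by rw [sub_eq_zero.1 h, mul_comm, sin_int_mul_pi])
  have hmem : ∀ δ ∈ nearestIntegers x (2 ^ m), |x - δ| ≤ (2 ^ m : ℝ) / 2 := fun δ hδ => by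
    exact_mod_cast abs_sub_le_of_mem_nearestIntegers hδ
  have hsum : ∑ δ ∈ nearestIntegers x (2 ^ m), psinc (2 ^ m) (x - δ) ^ 2 = 1 := by
    rw [nearestIntegers, sum_Ico_add_natCast, ← sum_range_psinc_sq hx m ⌈x - (2 ^ m : ℕ) / 2⌉]
    push_cast
    rfl
  constructor
  · calc 1 - ((2 : ℝ) ^ m)⁻¹
        = ∑ δ ∈ nearestIntegers x (2 ^ m), (psinc (2 ^ m) (x - δ) ^ 2 - (((2 : ℝ) ^ m) ^ 2)⁻¹) := by
          rw [sum_sub_distrib, hsum, sum_const, card_nearestIntegers, nsmul_eq_mul]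
          push_cast
          field_simp
      _ ≤ _ := sum_le_sum fun δ hδ =>
          sub_le_iff_le_add.2 (psinc_sq_le_sinc_sq_add hn (hne δ) (hmem δ hδ))
  · exact (sum_le_sum fun δ hδ => sinc_sq_le_psinc_sq hn (hne δ) (hmem δ hδ)).trans hsum.le

theorem hasSum_sinc_sq_sub_int (x : ℝ) : HasSum (fun δ : ℤ => _root_.sinc (x - δ) ^ 2) 1 := by
  by_cases hx : sin (π * x) = 0
  · obtain ⟨j, hj⟩ := sin_eq_zero_iff.1 hx
    obtain rfl : x = j := (mul_right_cancel₀ pi_ne_zero (hj.trans (mul_comm π x))).symm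
    convert hasSum_ite_eq j (1 : ℝ) using 2 with δ
    split_ifs with hδ
    · simp [hδ, _root_.sinc]
    · rw [sinc_sub_int_sq (by exact_mod_cast Ne.symm hδ), hx]
      simp
  · refine hasSum_of_isLUB_of_nonneg 1 (fun δ => sq_nonneg _) ⟨?_, fun b hb => ?_⟩
    · rintro _ ⟨s, rfl⟩
      obtain ⟨m, hm⟩ := pow_unbounded_of_one_lt (2 * ∑ δ ∈ s, |x - δ|) one_lt_two
      have hs : s ⊆ nearestIntegers x (2 ^ m) := fun δ hδ => by
        have hδx := abs_le.1
          (single_le_sum (f := fun δ : ℤ => |x - δ|) (fun _ _ => abs_nonneg _) hδ)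
        rw [mem_nearestIntegers]
        push_cast
        constructor <;> linarith
      exact (sum_le_sum_of_subset_of_nonneg hs fun _ _ _ => sq_nonneg _).trans
        (sum_sinc_sq_nearestIntegers_mem_Icc hx m).2
    · have hlim : Tendsto (fun m : ℕ => 1 - ((2 : ℝ) ^ m)⁻¹) atTop (𝓝 1) := by
        simpa using (tendsto_inv_atTop_zero.comp
          (tendsto_pow_atTop_atTop_of_one_lt (one_lt_two (α := ℝ)))).const_sub 1
      exact le_of_tendsto' hlim fun m =>
        (sum_sinc_sq_nearestIntegers_mem_Icc hx m).1.trans (hb ⟨_, rfl⟩)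

theorem sum_range_inv_sq_add_le {c : ℝ} (hc : 0 < c) (N : ℕ) :
    ∑ k ∈ range N, (((k : ℝ) + c + 1 / 2) ^ 2)⁻¹ ≤ c⁻¹ := by
  have hterm : ∀ k : ℕ,
      (((k : ℝ) + c + 1 / 2) ^ 2)⁻¹ ≤ ((k : ℝ) + c)⁻¹ - (((k + 1 : ℕ) : ℝ) + c)⁻¹ := by
    intro k
    have hk : 0 < (k : ℝ) + c := by positivity
    rw [Nat.cast_succ, inv_sub_inv hk.ne' (by positivity),
      show (k : ℝ) + 1 + c - (k + c) = 1 by ring, one_div (((k : ℝ) + c) * (k + 1 + c))]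
    exact inv_anti₀ (by positivity) (by nlinarith)
  calc _ ≤ ∑ k ∈ range N, (((k : ℝ) + c)⁻¹ - (((k + 1 : ℕ) : ℝ) + c)⁻¹) :=
        sum_le_sum fun k _ => hterm k
    _ = c⁻¹ - ((N : ℝ) + c)⁻¹ := by
        rw [sum_range_sub' fun k : ℕ => ((k : ℝ) + c)⁻¹, Nat.cast_zero, zero_add]
    _ ≤ c⁻¹ := sub_le_self _ (by positivity)

theorem sum_inv_sq_sub_le_of_forall_lt {x : ℝ} {Δ : ℤ} (hx : x < Δ + 1 / 2) {s : Finset ℤ}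
    (hs : ∀ δ ∈ s, Δ < δ) : ∑ δ ∈ s, ((x - δ) ^ 2)⁻¹ ≤ (Δ + 1 / 2 - x)⁻¹ := by
  obtain ⟨M, hM⟩ := s.bddAbove
  set N := (M - Δ).toNat
  have hs' : s ⊆ Ico (Δ + 1) (Δ + 1 + N) := fun δ hδ => by
    have := hM hδ
    have := hs δ hδ
    rw [mem_Ico]
    omega
  calc ∑ δ ∈ s, ((x - δ) ^ 2)⁻¹ ≤ ∑ δ ∈ Ico (Δ + 1) (Δ + 1 + N), ((x - δ) ^ 2)⁻¹ :=
        sum_le_sum_of_subset_of_nonneg hs' fun _ _ _ => by positivity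
    _ = ∑ k ∈ range N, (((k : ℝ) + (Δ + 1 / 2 - x) + 1 / 2) ^ 2)⁻¹ := by
        rw [sum_Ico_add_natCast]
        refine sum_congr rfl fun k _ => ?_
        push_cast
        ring
    _ ≤ _ := sum_range_inv_sq_add_le (by linarith) N

theorem sum_inv_sq_sub_le_of_forall_lt_abs {x : ℝ} {Δ : ℤ} (hx : |x| < Δ + 1 / 2)
    {s : Finset ℤ} (hs : ∀ δ ∈ s, Δ < |δ|) :
    ∑ δ ∈ s, ((x - δ) ^ 2)⁻¹ ≤ 2 * (Δ + 1 / 2 - |x|)⁻¹ := by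
  have hpos : 0 < Δ + 1 / 2 - |x| := by linarith
  have hright : ∑ δ ∈ s.filter (0 < ·), ((x - δ) ^ 2)⁻¹ ≤ (Δ + 1 / 2 - |x|)⁻¹ := by
    refine (sum_inv_sq_sub_le_of_forall_lt (Δ := Δ) (by linarith [le_abs_self x])
      fun δ hδ => ?_).trans (inv_anti₀ hpos (by linarith [le_abs_self x]))
    obtain ⟨hδs, hδ0⟩ := mem_filter.1 hδ
    simpa only [abs_of_pos hδ0] using hs δ hδs
  have hleft : ∑ δ ∈ s.filter (¬ 0 < ·), ((x - δ) ^ 2)⁻¹ ≤ (Δ + 1 / 2 - |x|)⁻¹ := by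
    calc ∑ δ ∈ s.filter (¬ 0 < ·), ((x - δ) ^ 2)⁻¹
        = ∑ δ ∈ (s.filter (¬ 0 < ·)).map (Equiv.neg ℤ).toEmbedding, ((-x - δ) ^ 2)⁻¹ := by
          rw [sum_map]
          refine sum_congr rfl fun δ _ => ?_
          simp only [Equiv.coe_toEmbedding, Equiv.neg_apply, Int.cast_neg]
          ring
      _ ≤ (Δ + 1 / 2 - -x)⁻¹ := by
          refine sum_inv_sq_sub_le_of_forall_lt (by linarith [neg_abs_le x]) fun δ hδ => ?_
          obtain ⟨ε, hε, rfl⟩ := Finset.mem_map.1 hδ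
          obtain ⟨hεs, hε0⟩ := mem_filter.1 hε
          rw [Equiv.coe_toEmbedding, Equiv.neg_apply]
          simpa only [abs_of_nonpos (not_lt.1 hε0)] using hs ε hεs
      _ ≤ _ := inv_anti₀ hpos (by linarith [neg_abs_le x])
  rw [← sum_filter_add_sum_filter_not s (0 < ·), two_mul]
  exact add_le_add hright hleft

theorem sum_sinc_sq_sub_int_le {x : ℝ} {Δ : ℤ} (hx : |x| < Δ + 1 / 2) {s : Finset ℤ}
    (hs : ∀ δ ∈ s, Δ < |δ|) :
    ∑ δ ∈ s, _root_.sinc (x - δ) ^ 2 ≤ 2 / (π ^ 2 * (Δ - |x| + 1 / 2)) := by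
  have hterm : ∀ δ ∈ s, _root_.sinc (x - δ) ^ 2 ≤ (π ^ 2)⁻¹ * ((x - δ) ^ 2)⁻¹ := fun δ hδ => by
    have hδ' : (Δ : ℝ) + 1 ≤ |(δ : ℝ)| := by exact_mod_cast (hs δ hδ : Δ + 1 ≤ |δ|)
    have hxδ : x ≠ δ := fun h => by rw [← h] at hδ'; linarith
    rw [sinc_sub_int_sq hxδ, mul_pow, div_eq_mul_inv, mul_inv]
    exact mul_le_of_le_one_left (by positivity) (sin_sq_le_one _)
  calc ∑ δ ∈ s, _root_.sinc (x - δ) ^ 2 ≤ ∑ δ ∈ s, (π ^ 2)⁻¹ * ((x - δ) ^ 2)⁻¹ := sum_le_sum hterm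
    _ ≤ (π ^ 2)⁻¹ * (2 * (Δ + 1 / 2 - |x|)⁻¹) := by
        rw [← mul_sum]
        exact mul_le_mul_of_nonneg_left (sum_inv_sq_sub_le_of_forall_lt_abs hx hs) (by positivity)
    _ = 2 / (π ^ 2 * (Δ - |x| + 1 / 2)) := by
        have : (Δ : ℝ) - |x| + 1 / 2 ≠ 0 := by linarith
        field_simp
        ring

theorem sinc_sq_sum_lower_bound_general (Δ : ℤ) (x : ℝ) (hx : |x| ≤ (Δ : ℝ)) :
    1 - 2 / (Real.pi ^ 2 * ((Δ : ℝ) - |x| + 1/2)) ≤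
      ∑ δ ∈ Finset.Icc (-Δ) Δ, (_root_.sinc (x - δ)) ^ 2 := by
  have hsum := hasSum_sinc_sq_sub_int x
  rw [sub_le_iff_le_add]
  nth_rw 1 [← hsum.tsum_eq]
  refine hsum.summable.tsum_le_of_sum_le fun s => ?_
  rw [← sum_inter_add_sum_sdiff s (Icc (-Δ) Δ)]
  refine add_le_add (sum_le_sum_of_subset_of_nonneg inter_subset_right fun _ _ _ => sq_nonneg _)
    (sum_sinc_sq_sub_int_le (by linarith) fun δ hδ => ?_)
  rw [Finset.mem_sdiff, mem_Icc] at hδ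
  rw [lt_abs]
  omega

/-- Lower bound on the sinc² series over a window of radius `Δ` around `x`. -/
theorem sinc_sq_sum_lower_bound (Δ : ℤ) (hΔ : 1 ≤ Δ) (x : ℝ) (hx : |x| ≤ (Δ : ℝ)) :
    1 - 2 / (Real.pi ^ 2 * ((Δ : ℝ) - |x| + 1/2)) ≤
      ∑ δ ∈ Finset.Icc (-Δ) Δ, (_root_.sinc (x - δ)) ^ 2 :=
  sinc_sq_sum_lower_bound_general Δ x hx
end

section
/- For any integer Δ ≥ 1, any real c > 1, and any real x with |x| ≥ Δ + c: ∑_{|δ| ≤ Δ, δ ∈ ℤ} sinc²(x − δ) < 2/(π²·(c − 1)). -/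
/-!
Off the origin `sinc² y ≤ 1/(π² y²)`, and for `y > 1` the comparison `1/y² ≤ 1/(y - 1) - 1/y`
bounds the sum over `δ ∈ [-Δ, Δ]` by a telescoping sum, which is at most
`1/(π² (x - Δ - 1)) ≤ 1/(π² (c - 1))` when `x ≥ Δ + c`. The case `x ≤ -(Δ + c)` reduces to this
one because `sinc` is even and the range of summation is symmetric.
-/

open scoped Real

theorem Int.sum_Ico_sub {M : Type*} [AddCommGroup M] (f : ℤ → M) {a b : ℤ} (hab : a ≤ b) :
    ∑ i ∈ Finset.Ico a b, (f (i + 1) - f i) = f b - f a := by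
  induction b, hab using Int.leInduction with
  | base => simp
  | succ b hab ih =>
    rw [← Finset.insert_Ico_right_eq_Ico_add_one hab, Finset.sum_insert Finset.right_notMem_Ico,
      ih]
    abel

theorem Finset.sum_Icc_neg_comp_neg {α M : Type*} [AddCommGroup α] [PartialOrder α]
    [IsOrderedAddMonoid α] [LocallyFiniteOrder α] [AddCommMonoid M] (f : α → M) (n : α) :
    ∑ i ∈ Icc (-n) n, f (-i) = ∑ i ∈ Icc (-n) n, f i :=
  sum_nbij' Neg.neg Neg.neg
    (fun i hi => by rw [mem_Icc] at hi ⊢; exact ⟨neg_le_neg hi.2, neg_le.mp hi.1⟩)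
    (fun i hi => by rw [mem_Icc] at hi ⊢; exact ⟨neg_le_neg hi.2, neg_le.mp hi.1⟩)
    (fun i _ => neg_neg i) (fun i _ => neg_neg i) (fun _ _ => rfl)

theorem inv_sq_le_inv_sub_one_sub_inv {y : ℝ} (hy : 1 < y) : (y ^ 2)⁻¹ ≤ (y - 1)⁻¹ - y⁻¹ := by
  have h : (y - 1)⁻¹ - y⁻¹ = ((y - 1) * y)⁻¹ := by
    field_simp [sub_ne_zero.mpr hy.ne', (zero_lt_one.trans hy).ne']
    ring
  rw [h, sq]
  gcongr
  nlinarith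

theorem sinc_neg (y : ℝ) : sinc (-y) = sinc y := by
  by_cases hy : y = 0
  · simp [hy]
  · rw [sinc, sinc, if_neg (neg_ne_zero.mpr hy), if_neg hy, mul_neg, Real.sin_neg,
      neg_div_neg_eq]

theorem sinc_sq_le {y : ℝ} (hy : y ≠ 0) : sinc y ^ 2 ≤ (π ^ 2 * y ^ 2)⁻¹ := by
  rw [sinc, if_neg hy, div_pow, mul_pow, div_eq_mul_inv]
  exact mul_le_of_le_one_left (by positivity) (Real.sin_sq_le_one _)

theorem sum_Icc_sinc_sq_neg (n : ℤ) (x : ℝ) :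
    ∑ δ ∈ Finset.Icc (-n) n, sinc (-x - δ) ^ 2 = ∑ δ ∈ Finset.Icc (-n) n, sinc (x - δ) ^ 2 := by
  rw [← Finset.sum_Icc_neg_comp_neg]
  refine Finset.sum_congr rfl fun δ _ => ?_
  rw [← sinc_neg]
  push_cast
  ring_nf

theorem sum_Icc_sinc_sq_le (x : ℝ) {a b : ℤ} (hab : a ≤ b + 1) (hx : (b : ℝ) + 1 < x) :
    ∑ δ ∈ Finset.Icc a b, sinc (x - δ) ^ 2 ≤ (π ^ 2 * (x - (b + 1)))⁻¹ := by
  set f : ℤ → ℝ := fun δ => (π ^ 2)⁻¹ * (x - δ)⁻¹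
  have hterm : ∀ δ ∈ Finset.Ico a (b + 1), sinc (x - δ) ^ 2 ≤ f (δ + 1) - f δ := by
    intro δ hδ
    have hδ : (δ : ℝ) + 1 < x := by
      have : (δ : ℝ) ≤ b := by exact_mod_cast Int.lt_add_one_iff.mp (Finset.mem_Ico.mp hδ).2
      linarith
    calc sinc (x - δ) ^ 2 ≤ (π ^ 2)⁻¹ * ((x - δ) ^ 2)⁻¹ := by
          rw [← mul_inv]; exact sinc_sq_le (by linarith)
      _ ≤ (π ^ 2)⁻¹ * ((x - δ - 1)⁻¹ - (x - δ)⁻¹) := by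
          gcongr; exact inv_sq_le_inv_sub_one_sub_inv (by linarith)
      _ = f (δ + 1) - f δ := by simp only [f]; push_cast; ring_nf
  have hfa : 0 ≤ f a := by
    have : (a : ℝ) ≤ b + 1 := by exact_mod_cast hab
    exact mul_nonneg (by positivity) (inv_nonneg.mpr (by linarith))
  calc ∑ δ ∈ Finset.Icc a b, sinc (x - δ) ^ 2
      = ∑ δ ∈ Finset.Ico a (b + 1), sinc (x - δ) ^ 2 := by
        rw [Finset.Ico_add_one_right_eq_Icc]
    _ ≤ f (b + 1) - f a := (Finset.sum_le_sum hterm).trans_eq (Int.sum_Ico_sub f hab)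
    _ ≤ f (b + 1) := sub_le_self _ hfa
    _ = (π ^ 2 * (x - (b + 1)))⁻¹ := by simp only [f]; push_cast; rw [mul_inv]

/-- Tail upper bound on the sinc² series: if `|x| ≥ Δ + c` with `c > 1` then
`∑_{|δ| ≤ Δ} sinc²(x − δ) < 2/(π²(c − 1))`. -/
theorem sinc_sq_sum_upper_bound (Δ : ℤ) (hΔ : 1 ≤ Δ) (c : ℝ) (hc : 1 < c)
    (x : ℝ) (hx : (Δ : ℝ) + c ≤ |x|) :
    ∑ δ ∈ Finset.Icc (-Δ) Δ, (_root_.sinc (x - δ)) ^ 2 < 2 / (Real.pi ^ 2 * (c - 1)) := by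
  wlog hx₀ : 0 ≤ x generalizing x
  · rw [← sum_Icc_sinc_sq_neg]
    exact this (-x) (by rwa [abs_neg]) (by linarith)
  rw [abs_of_nonneg hx₀] at hx
  have hpos : 0 < π ^ 2 * (c - 1) := mul_pos (by positivity) (by linarith)
  calc ∑ δ ∈ Finset.Icc (-Δ) Δ, sinc (x - δ) ^ 2
      ≤ (π ^ 2 * (x - (Δ + 1)))⁻¹ := sum_Icc_sinc_sq_le x (by omega) (by linarith)
    _ ≤ (π ^ 2 * (c - 1))⁻¹ :=
        inv_anti₀ hpos (mul_le_mul_of_nonneg_left (by linarith) (by positivity))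
    _ < 2 / (π ^ 2 * (c - 1)) := by rw [div_eq_mul_inv]; linarith [inv_pos.mpr hpos]
end
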